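/- Let L/K be a finite extension of a perfect field K with Galois closure L̃ and G = Gal(L̃/K). If G has fewer than two proper nontrivial normal subgroups, then L/K is general primitive. In particular, if G is simple then L/K is general primitive. -/

import Mathlib

open IntermediateField Module

section Defs

variable (K Kbar : Type*) [Field K] [Field Kbar] [Algebra K Kbar]

/-- The Galois closure inside the ambient field `Kbar` of an intermediate field `L` of
`Kbar / K`: the compositum of all the `K`-conjugates of `L` in `Kbar`. -/
noncomputable def galClosure (L : IntermediateField K Kbar) : IntermediateField K Kbar :=
  ⨆ f : ↥L →ₐ[K] Kbar, f.fieldRange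

/-- The subgroup `H = Gal(L̃/L)` of `G = Gal(L̃/K)`. -/
noncomputable def fixSub (L : IntermediateField K Kbar) :
    Subgroup (↥(galClosure K Kbar L) ≃ₐ[K] ↥(galClosure K Kbar L)) :=
  (IntermediateField.comap (galClosure K Kbar L).val L).fixingSubgroup

/-- The cluster size `r_K(L) = [N_G(H) : H]`. -/
noncomputable def clusterSize (L : IntermediateField K Kbar) : ℕ :=
  (fixSub K Kbar L).relIndex (Subgroup.normalizer (fixSub K Kbar L : Set (↥(galClosure K Kbar L) ≃ₐ[K] ↥(galClosure K Kbar L))))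

/-- The number of clusters `s_K(L) = [G : N_G(H)]`. -/
noncomputable def numClusters (L : IntermediateField K Kbar) : ℕ :=
  (Subgroup.normalizer (fixSub K Kbar L : Set (↥(galClosure K Kbar L) ≃ₐ[K] ↥(galClosure K Kbar L)))).index

/-- The ascending index `t_K(L) = [G : H^G]`. -/
noncomputable def ascIndex (L : IntermediateField K Kbar) : ℕ :=
  (Subgroup.normalClosure (fixSub K Kbar L :
      Set (↥(galClosure K Kbar L) ≃ₐ[K] ↥(galClosure K Kbar L)))).index

/-- The quantity `u_K(L) = [H^G : H]`. -/
noncomputable def uIndex (L : IntermediateField K Kbar) : ℕ :=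
  (fixSub K Kbar L).relIndex (Subgroup.normalClosure (fixSub K Kbar L :
      Set (↥(galClosure K Kbar L) ≃ₐ[K] ↥(galClosure K Kbar L))))

/-- `M/K` is obtained by strong cluster magnification from `L/K` through `F/K`. -/
def IsSCMvia (M L F : IntermediateField K Kbar) : Prop :=
  L ≤ M ∧ 2 < Module.finrank K ↥L ∧ FiniteDimensional K ↥F ∧ IsGalois K ↥F ∧
    galClosure K Kbar L ⊓ F = ⊥ ∧ L ⊔ F = M

/-- `M/K` is primitive: it is not obtained by a nontrivial strong cluster magnification
from any subextension over `K`. -/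
def IsPrimitive (M : IntermediateField K Kbar) : Prop :=
  ¬ ∃ L F : IntermediateField K Kbar, IsSCMvia K Kbar M L F ∧ F ≠ ⊥

/-- `M/K` is obtained by strong general magnification from `L/K` through `J/K`. -/
def IsSGMvia (M L J : IntermediateField K Kbar) : Prop :=
  L ≤ M ∧ 1 < Module.finrank K ↥L ∧ FiniteDimensional K ↥J ∧
    galClosure K Kbar L ⊓ galClosure K Kbar J = ⊥ ∧ L ⊔ J = M

/-- `M/K` is general primitive: not obtained by a nontrivial strong general magnification
from any subextension over `K`. -/
def IsGeneralPrimitive (M : IntermediateField K Kbar) : Prop :=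
  ¬ ∃ L J : IntermediateField K Kbar, IsSGMvia K Kbar M L J ∧ J ≠ ⊥

/-- `F/E` is a Galois pair of intermediate fields: `E ≤ F` and `F/E` is Galois. -/
def IsGaloisPair (E F : IntermediateField K Kbar) : Prop :=
  ∃ h : E ≤ F, IsGalois ↥E ↥(IntermediateField.extendScalars h)

/-- One step of the unique descending chain: `N'` is an intermediate field of `N/K` such
that `N/N'` is Galois of maximal possible degree. -/
def DescStep (N N' : IntermediateField K Kbar) : Prop :=
  N' ≤ N ∧ IsGaloisPair K Kbar N' N ∧
    ∀ N'' : IntermediateField K Kbar, N'' ≤ N → IsGaloisPair K Kbar N'' N →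
      Module.finrank K ↥N' ≤ Module.finrank K ↥N''

/-- One step of the unique ascending chain for `L/K`: `F'` is an intermediate field of
`L/F` such that `F'/F` is Galois of maximal possible degree. -/
def AscStep (L F F' : IntermediateField K Kbar) : Prop :=
  F ≤ F' ∧ F' ≤ L ∧ IsGaloisPair K Kbar F F' ∧
    ∀ F'' : IntermediateField K Kbar, F ≤ F'' → F'' ≤ L → IsGaloisPair K Kbar F F'' →
      Module.finrank K ↥F'' ≤ Module.finrank K ↥F'

/-- `E` occurs in the unique descending chain of `L/K`. -/
def InDescChain (L E : IntermediateField K Kbar) : Prop :=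
  Relation.ReflTransGen (DescStep K Kbar) L E

/-- `E` occurs in the unique ascending chain of `L/K`. -/
def InAscChain (L E : IntermediateField K Kbar) : Prop :=
  Relation.ReflTransGen (AscStep K Kbar L) ⊥ E

end Defs

/-!
Inside the Galois closure `L̃`, a strong general magnification `L = L'J` yields two
subextensions `L̃'` and `J̃`, Galois over `K` because `K` is perfect, with `L̃' ∩ J̃ = K`.
Their fixing groups are normal subgroups of `Gal(L̃/K)` generating the whole group, and both
are proper since `L' ≠ K` and `J ≠ K`; so both are also nontrivial, and if `Gal(L̃/K)` has at
most one proper nontrivial normal subgroup they coincide and equal their join, the whole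
group, a contradiction.
-/

def HasAtMostOneProperNontrivialNormalSubgroup (G : Type*) [Group G] : Prop :=
  ∀ N₁ N₂ : Subgroup G, N₁.Normal → N₂.Normal → N₁ ≠ ⊥ → N₁ ≠ ⊤ → N₂ ≠ ⊥ → N₂ ≠ ⊤ → N₁ = N₂

theorem IsSimpleGroup.hasAtMostOneProperNontrivialNormalSubgroup {G : Type*} [Group G]
    [IsSimpleGroup G] : HasAtMostOneProperNontrivialNormalSubgroup G :=
  fun N₁ _ h₁ _ hbot₁ htop₁ _ _ =>
    absurd ((IsSimpleGroup.eq_bot_or_eq_top_of_normal N₁ h₁).resolve_left hbot₁) htop₁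

namespace HasAtMostOneProperNontrivialNormalSubgroup

variable {G : Type*} [Group G]

theorem eq_top_or_eq_top_of_sup_eq_top (hG : HasAtMostOneProperNontrivialNormalSubgroup G)
    {N₁ N₂ : Subgroup G} (h₁ : N₁.Normal) (h₂ : N₂.Normal) (hsup : N₁ ⊔ N₂ = ⊤) :
    N₁ = ⊤ ∨ N₂ = ⊤ := by
  by_contra! ⟨htop₁, htop₂⟩
  have hbot₁ : N₁ ≠ ⊥ := fun h => htop₂ (by rwa [h, bot_sup_eq] at hsup)
  have hbot₂ : N₂ ≠ ⊥ := fun h => htop₁ (by rwa [h, sup_bot_eq] at hsup)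
  have heq : N₁ = N₂ := hG N₁ N₂ h₁ h₂ hbot₁ htop₁ hbot₂ htop₂
  exact htop₁ (by rwa [← heq, sup_idem] at hsup)

end HasAtMostOneProperNontrivialNormalSubgroup

namespace IsGalois

variable {K T : Type*} [Field K] [Field T] [Algebra K T] [FiniteDimensional K T] [IsGalois K T]

theorem fixingSubgroup_eq_top_iff {E : IntermediateField K T} : E.fixingSubgroup = ⊤ ↔ E = ⊥ := by
  rw [← fixingSubgroup_bot]
  exact intermediateFieldEquivSubgroup.injective.eq_iff

theorem fixingSubgroup_inf (E F : IntermediateField K T) :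
    (E ⊓ F).fixingSubgroup = E.fixingSubgroup ⊔ F.fixingSubgroup :=
  congrArg OrderDual.ofDual (intermediateFieldEquivSubgroup.map_inf E F)

theorem eq_bot_or_eq_bot_of_inf_eq_bot
    (hG : HasAtMostOneProperNontrivialNormalSubgroup (T ≃ₐ[K] T))
    {E F : IntermediateField K T} [IsGalois K E] [IsGalois K F] (h : E ⊓ F = ⊥) :
    E = ⊥ ∨ F = ⊥ := by
  simp only [← fixingSubgroup_eq_top_iff] at h ⊢
  exact hG.eq_top_or_eq_top_of_sup_eq_top inferInstance inferInstance
    (fixingSubgroup_inf E F ▸ h)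

end IsGalois

namespace IntermediateField

variable {K Kbar : Type*} [Field K] [Field Kbar] [Algebra K Kbar]

theorem eq_bot_or_eq_bot_of_le_of_inf_eq_bot {T E F : IntermediateField K Kbar}
    [FiniteDimensional K T] [IsGalois K T]
    (hG : HasAtMostOneProperNontrivialNormalSubgroup (T ≃ₐ[K] T))
    [IsGalois K E] [IsGalois K F] (hE : E ≤ T) (hF : F ≤ T) (h : E ⊓ F = ⊥) :
    E = ⊥ ∨ F = ⊥ := by
  have : IsGalois K (restrict hE) := IsGalois.of_algEquiv (restrictAlgEquiv hE)
  have : IsGalois K (restrict hF) := IsGalois.of_algEquiv (restrictAlgEquiv hF)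
  have hres : restrict hE ⊓ restrict hF = ⊥ := by
    rw [← lift_inj, lift_bot, lift_inf, lift_restrict, lift_restrict, h]
  refine (IsGalois.eq_bot_or_eq_bot_of_inf_eq_bot hG hres).imp (fun h' => ?_) (fun h' => ?_)
  · rw [← lift_restrict hE, h', lift_bot]
  · rw [← lift_restrict hF, h', lift_bot]

end IntermediateField

section galClosure

variable {K Kbar : Type*} [Field K] [Field Kbar] [Algebra K Kbar]

theorem le_galClosure (L : IntermediateField K Kbar) : L ≤ galClosure K Kbar L :=
  le_normalClosure L

theorem galClosure_mono [Normal K Kbar] {L L' : IntermediateField K Kbar} (h : L ≤ L') :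
    galClosure K Kbar L ≤ galClosure K Kbar L' :=
  normalClosure_mono L L' h

theorem eq_bot_of_galClosure_eq_bot {L : IntermediateField K Kbar}
    (h : galClosure K Kbar L = ⊥) : L = ⊥ :=
  le_bot_iff.mp (h ▸ le_galClosure L)

instance galClosure.finiteDimensional (L : IntermediateField K Kbar) [FiniteDimensional K L] :
    FiniteDimensional K (galClosure K Kbar L) :=
  normalClosure.is_finiteDimensional K L Kbar

instance galClosure.isGalois [PerfectField K] [Normal K Kbar] (L : IntermediateField K Kbar) :
    IsGalois K (galClosure K Kbar L) :=
  have : Normal K (galClosure K Kbar L) := normalClosure.normal K L Kbar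
  ⟨⟩

end galClosure

/-- Let `L/K` be a finite extension of a perfect field `K` with Galois
closure `L̃` and `G = Gal(L̃/K)`.  If `G` has fewer than two proper nontrivial normal
subgroups, then `L/K` is general primitive.  In particular, if `G` is simple then `L/K` is
general primitive. -/
theorem general_primitive_of_few_normal_subgroups
    (K Kbar : Type*) [Field K] [PerfectField K] [Field Kbar] [Algebra K Kbar]
    [IsAlgClosure K Kbar]
    (L : IntermediateField K Kbar) [FiniteDimensional K ↥L] :
    ((∀ N₁ N₂ : Subgroup (↥(galClosure K Kbar L) ≃ₐ[K] ↥(galClosure K Kbar L)),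
        N₁.Normal → N₂.Normal → N₁ ≠ ⊥ → N₁ ≠ ⊤ → N₂ ≠ ⊥ → N₂ ≠ ⊤ → N₁ = N₂) →
      IsGeneralPrimitive K Kbar L) ∧
    (IsSimpleGroup (↥(galClosure K Kbar L) ≃ₐ[K] ↥(galClosure K Kbar L)) →
      IsGeneralPrimitive K Kbar L) := by
  have main : HasAtMostOneProperNontrivialNormalSubgroup
      (galClosure K Kbar L ≃ₐ[K] galClosure K Kbar L) → IsGeneralPrimitive K Kbar L := by
    rintro hG ⟨L', J, ⟨hL', hrank, -, hdisj, hsup⟩, hJ⟩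
    have hJ' : J ≤ L := hsup ▸ le_sup_right
    rcases eq_bot_or_eq_bot_of_le_of_inf_eq_bot hG (galClosure_mono hL')
      (galClosure_mono hJ') hdisj with h | h
    · rw [eq_bot_of_galClosure_eq_bot h, IntermediateField.finrank_bot] at hrank
      exact lt_irrefl 1 hrank
    · exact hJ (eq_bot_of_galClosure_eq_bot h)
  exact ⟨main, fun _ => main IsSimpleGroup.hasAtMostOneProperNontrivialNormalSubgroup⟩
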